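/- arXiv:2310.20571 — 3 statements merged into one kernel-verified Lean document; each statement's English description precedes it below -/
import Mathlib

section
/- Every descent-preserving poset isomorphism f between two left weak Bruhat intervals I₁ and I₂ in S_n is a colored digraph isomorphism: for γ, γ' ∈ I₁ and 1 ≤ i ≤ n-1, γ' = s_iγ with γ ≤_L γ' holds if and only if f(γ') = s_i f(γ) with f(γ) ≤_L f(γ'). -/
/-- The left inversion set `Inv_L(σ) = {(i,j) : i < j, σ(i) > σ(j)}`. -/
def InvL {n : ℕ} (σ : Equiv.Perm (Fin n)) : Set (Fin n × Fin n) :=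
  {p | p.1 < p.2 ∧ σ p.2 < σ p.1}

/-- The left weak Bruhat order: `σ ≤_L ρ` iff `Inv_L(σ) ⊆ Inv_L(ρ)`. -/
def lLE {n : ℕ} (σ ρ : Equiv.Perm (Fin n)) : Prop := InvL σ ⊆ InvL ρ

/-- The right inversion set `Inv_R(σ) = {(σ(i),σ(j)) : i < j, σ(i) > σ(j)}`. -/
def InvR {n : ℕ} (σ : Equiv.Perm (Fin n)) : Set (Fin n × Fin n) :=
  {p | p.2 < p.1 ∧ σ⁻¹ p.1 < σ⁻¹ p.2}

/-- The right weak Bruhat order: `σ ≤_R ρ` iff `Inv_R(σ) ⊆ Inv_R(ρ)`. -/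
def rLE {n : ℕ} (σ ρ : Equiv.Perm (Fin n)) : Prop := InvR σ ⊆ InvR ρ

/-- The left weak Bruhat interval `[σ, ρ]_L`. -/
def lInterval {n : ℕ} (σ ρ : Equiv.Perm (Fin n)) : Set (Equiv.Perm (Fin n)) :=
  {γ | lLE σ γ ∧ lLE γ ρ}

/-- The right weak Bruhat interval `[σ, ρ]_R`. -/
def rInterval {n : ℕ} (σ ρ : Equiv.Perm (Fin n)) : Set (Equiv.Perm (Fin n)) :=
  {γ | rLE σ γ ∧ rLE γ ρ}

/-- The Coxeter length of a permutation, i.e. its number of inversions. -/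
def len {n : ℕ} (σ : Equiv.Perm (Fin n)) : ℕ :=
  (Finset.univ.filter fun p : Fin n × Fin n => p.1 < p.2 ∧ σ p.2 < σ p.1).card

/-- The simple transposition `s_i` (swapping the adjacent values `i`, `i+1`). -/
def sgen {n : ℕ} (i : Fin n) : Equiv.Perm (Fin (n + 1)) :=
  Equiv.swap i.castSucc i.succ

/-- The left descent set `Des_L(σ) = {i : ℓ(s_i σ) < ℓ(σ)}`. -/
def DesL {n : ℕ} (σ : Equiv.Perm (Fin (n + 1))) : Set (Fin n) :=
  {i | len (sgen i * σ) < len σ}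

/-!
Left multiplication by `s_i` adds or removes exactly one inversion, the one formed by the
positions of the values `i` and `i + 1`. Hence `γ ≤_L s_i γ` holds exactly when `i` is not a left
descent of `γ`, and then `s_i γ` covers `γ`. Since intervals are convex and every cover in the
left weak order is of the form `x ⋖ s_j x`, the isomorphism `f` sends `γ ⋖ s_i γ` to some
`f γ ⋖ s_j f γ`. Then `j` is a descent of `s_i γ` but not of `γ`, by descent preservation, and the
only descent that `s_i` can create on an ascent `i` is `i` itself. The converse direction follows
by applying this to the inverse of `f`.
-/

open Equiv

variable {n : ℕ}

lemma sgen_lt_sgen_iff (i : Fin n) {u v : Fin (n + 1)} :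
    sgen i u < sgen i v ↔
      (u < v ∧ ¬(u = i.castSucc ∧ v = i.succ)) ∨ (u = i.succ ∧ v = i.castSucc) := by
  simp only [sgen, swap_apply_def]
  split_ifs <;> simp only [Fin.lt_def, Fin.ext_iff, Fin.val_castSucc, Fin.val_succ] at * <;> omega

lemma sgen_apply_of_val_ne {i : Fin n} {v : Fin (n + 1)} (h₁ : (v : ℕ) ≠ i)
    (h₂ : (v : ℕ) ≠ i + 1) : sgen i v = v :=
  swap_apply_of_ne_of_ne (by simpa [Fin.ext_iff] using h₁) (by simpa [Fin.ext_iff] using h₂)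

lemma inv_sgen_mul_apply (i : Fin n) (σ : Perm (Fin (n + 1))) (v : Fin (n + 1)) :
    (sgen i * σ)⁻¹ v = σ⁻¹ (sgen i v) := by
  simp [sgen, mul_inv_rev, swap_inv]

lemma sgen_mul_sgen_mul (i : Fin n) (σ : Perm (Fin (n + 1))) : sgen i * (sgen i * σ) = σ :=
  swap_mul_self_mul _ _ σ

lemma sgen_mul_ne_self (i : Fin n) (σ : Perm (Fin (n + 1))) : sgen i * σ ≠ σ := by
  rw [Ne, mul_eq_right, sgen, swap_eq_one_iff]
  exact Fin.castSucc_lt_succ.ne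

lemma inv_apply_castSucc_ne_succ (σ : Perm (Fin (n + 1))) (i : Fin n) :
    σ⁻¹ i.castSucc ≠ σ⁻¹ i.succ :=
  σ⁻¹.injective.ne Fin.castSucc_lt_succ.ne

lemma notMem_invL_inv_castSucc_succ {σ : Perm (Fin (n + 1))} {i : Fin n} :
    (σ⁻¹ i.castSucc, σ⁻¹ i.succ) ∉ InvL σ := by
  rintro ⟨-, h⟩
  simp only [Perm.coe_inv, apply_symm_apply] at h
  exact Fin.castSucc_lt_succ.not_gt h

lemma invL_sgen_mul_of_lt {σ : Perm (Fin (n + 1))} {i : Fin n}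
    (h : σ⁻¹ i.castSucc < σ⁻¹ i.succ) :
    InvL (sgen i * σ) = insert (σ⁻¹ i.castSucc, σ⁻¹ i.succ) (InvL σ) := by
  ext ⟨k, l⟩
  simp only [InvL, Set.mem_insert_iff, Set.mem_ofPred_eq, Prod.mk.injEq, Perm.mul_apply,
    sgen_lt_sgen_iff, ← Perm.eq_inv_iff_eq]
  constructor
  · rintro ⟨hkl, ⟨hlt, -⟩ | ⟨rfl, rfl⟩⟩
    · exact Or.inr ⟨hkl, hlt⟩
    · exact Or.inl ⟨rfl, rfl⟩
  · rintro (⟨rfl, rfl⟩ | ⟨hkl, hlt⟩)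
    · exact ⟨h, Or.inr ⟨rfl, rfl⟩⟩
    · refine ⟨hkl, Or.inl ⟨hlt, ?_⟩⟩
      rintro ⟨rfl, rfl⟩
      exact hkl.not_gt h

lemma len_eq_ncard_invL (σ : Perm (Fin n)) : len σ = (InvL σ).ncard := by
  rw [len, ← Set.ncard_coe_finset]
  congr 1
  ext p
  simp [InvL]

lemma len_sgen_mul_of_lt {σ : Perm (Fin (n + 1))} {i : Fin n}
    (h : σ⁻¹ i.castSucc < σ⁻¹ i.succ) : len (sgen i * σ) = len σ + 1 := by
  rw [len_eq_ncard_invL, len_eq_ncard_invL, invL_sgen_mul_of_lt h,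
    Set.ncard_insert_of_notMem notMem_invL_inv_castSucc_succ]

lemma mem_desL_iff {σ : Perm (Fin (n + 1))} {i : Fin n} :
    i ∈ DesL σ ↔ σ⁻¹ i.succ < σ⁻¹ i.castSucc := by
  rcases (inv_apply_castSucc_ne_succ σ i).lt_or_gt with h | h
  · exact iff_of_false (by simp [DesL, len_sgen_mul_of_lt h]) h.not_gt
  · have h' : (sgen i * σ)⁻¹ i.castSucc < (sgen i * σ)⁻¹ i.succ := by
      simpa [inv_sgen_mul_apply, sgen] using h
    have hlen := len_sgen_mul_of_lt h'
    rw [sgen_mul_sgen_mul] at hlen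
    exact iff_of_true (by simp [DesL, hlen]) h

lemma notMem_desL_iff {σ : Perm (Fin (n + 1))} {i : Fin n} :
    i ∉ DesL σ ↔ σ⁻¹ i.castSucc < σ⁻¹ i.succ := by
  rw [mem_desL_iff, not_lt, le_iff_lt_or_eq, or_iff_left (inv_apply_castSucc_ne_succ σ i)]

lemma lLE_sgen_mul_iff {σ : Perm (Fin (n + 1))} {i : Fin n} :
    lLE σ (sgen i * σ) ↔ i ∉ DesL σ := by
  refine ⟨fun hle hi => ?_, fun h => ?_⟩
  · rw [mem_desL_iff] at hi
    have hinv : (σ⁻¹ i.succ, σ⁻¹ i.castSucc) ∈ InvL σ := ⟨hi, by simp⟩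
    exact Fin.castSucc_lt_succ.not_gt (by simpa [sgen] using (hle hinv).2)
  · rw [lLE, invL_sgen_mul_of_lt (notMem_desL_iff.1 h)]
    exact Set.subset_insert _ _

lemma desL_sgen_mul_self {σ : Perm (Fin (n + 1))} {i : Fin n} (h : i ∉ DesL σ) :
    i ∈ DesL (sgen i * σ) := by
  rw [DesL, Set.mem_ofPred_eq, sgen_mul_sgen_mul, len_sgen_mul_of_lt (notMem_desL_iff.1 h)]
  exact lt_add_one _

lemma desL_sgen_mul_subset {σ : Perm (Fin (n + 1))} {i : Fin n} (h : i ∉ DesL σ) :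
    DesL (sgen i * σ) ⊆ insert i (DesL σ) := by
  intro j hj
  rw [Set.mem_insert_iff, or_iff_not_imp_right]
  intro hj'
  rw [mem_desL_iff, inv_sgen_mul_apply, inv_sgen_mul_apply] at hj
  rw [notMem_desL_iff] at h hj'
  by_contra hji
  have hji' : (j : ℕ) ≠ i := fun h => hji (Fin.ext h)
  -- For `j = i ± 1` the inequalities put three positions of `σ⁻¹` in cyclic order; otherwise
  -- `sgen i` fixes `j` and `j + 1`.
  by_cases hlo : j.succ = i.castSucc
  · have hlo' : (j : ℕ) + 1 = i := by simpa [Fin.ext_iff] using hlo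
    have e : sgen i j.castSucc = j.castSucc :=
      sgen_apply_of_val_ne (by simp; omega) (by simp; omega)
    rw [e, hlo, sgen, swap_apply_left] at hj
    rw [hlo] at hj'
    exact (hj.trans (hj'.trans h)).false
  by_cases hhi : j.castSucc = i.succ
  · have hhi' : (j : ℕ) = i + 1 := by simpa [Fin.ext_iff] using hhi
    have e : sgen i j.succ = j.succ :=
      sgen_apply_of_val_ne (by simp; omega) (by simp; omega)
    rw [e, hhi, sgen, swap_apply_right] at hj
    rw [hhi] at hj'
    exact (hj.trans (h.trans hj')).false
  have hlo' : (j : ℕ) + 1 ≠ i := by simpa [Fin.ext_iff] using hlo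
  have hhi' : (j : ℕ) ≠ i + 1 := by simpa [Fin.ext_iff] using hhi
  have e₁ : sgen i j.castSucc = j.castSucc :=
    sgen_apply_of_val_ne (by simp; omega) (by simp; omega)
  have e₂ : sgen i j.succ = j.succ :=
    sgen_apply_of_val_ne (by simp; omega) (by simp; omega)
  rw [e₁, e₂] at hj
  exact hj.not_gt hj'

lemma eq_of_strictMono_mul_inv {x y : Perm (Fin n)} (h : StrictMono (y * x⁻¹)) : x = y :=
  Equiv.ext fun v => by simpa using (h.apply_eq (x := x v)).symm

lemma lLE_antisymm {x y : Perm (Fin n)} (hxy : lLE x y) (hyx : lLE y x) : x = y := by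
  refine eq_of_strictMono_mul_inv fun u v huv => ?_
  simp only [Perm.mul_apply]
  rcases (x⁻¹.injective.ne huv.ne).lt_or_gt with hlt | hgt
  · by_contra! hle
    have hinv : (x⁻¹ u, x⁻¹ v) ∈ InvL y := ⟨hlt, hle.lt_of_ne (y.injective.ne hlt.ne')⟩
    exact huv.not_gt (by simpa using (hyx hinv).2)
  · exact (hxy (show (x⁻¹ v, x⁻¹ u) ∈ InvL x from ⟨hgt, by simpa using huv⟩)).2

lemma exists_lLE_sgen_mul {x y : Perm (Fin (n + 1))} (hxy : lLE x y) (hne : x ≠ y) :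
    ∃ j, j ∉ DesL x ∧ lLE (sgen j * x) y := by
  by_contra! hstep
  refine hne (eq_of_strictMono_mul_inv (Fin.strictMono_iff_lt_succ.2 fun j => ?_))
  simp only [Perm.mul_apply]
  by_cases hj : j ∈ DesL x
  · exact (hxy (show (x⁻¹ j.succ, x⁻¹ j.castSucc) ∈ InvL x from
      ⟨mem_desL_iff.1 hj, by simp⟩)).2
  · have hasc := notMem_desL_iff.1 hj
    have hp : (x⁻¹ j.castSucc, x⁻¹ j.succ) ∉ InvL y := fun hp =>
      hstep j hj (by rw [lLE, invL_sgen_mul_of_lt hasc]; exact Set.insert_subset hp hxy)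
    exact (not_lt.1 fun h => hp ⟨hasc, h⟩).lt_of_ne
      (y.injective.ne (inv_apply_castSucc_ne_succ x j))

lemma eq_or_eq_of_lLE_of_lLE_sgen_mul {γ w : Perm (Fin (n + 1))} {i : Fin n}
    (h : i ∉ DesL γ) (hγw : lLE γ w) (hw : lLE w (sgen i * γ)) : w = γ ∨ w = sgen i * γ := by
  have hinvL := invL_sgen_mul_of_lt (notMem_desL_iff.1 h)
  by_cases hp : (γ⁻¹ i.castSucc, γ⁻¹ i.succ) ∈ InvL w
  · exact .inr (lLE_antisymm hw (by rw [lLE, hinvL]; exact Set.insert_subset hp hγw))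
  · rw [lLE, hinvL, Set.subset_insert_iff_of_notMem hp] at hw
    exact .inl (lLE_antisymm hw hγw)

structure IsDescentPreservingIso (I J : Set (Perm (Fin (n + 1))))
    (f : Perm (Fin (n + 1)) → Perm (Fin (n + 1))) : Prop where
  bijOn : Set.BijOn f I J
  lLE_iff : ∀ x ∈ I, ∀ y ∈ I, lLE x y ↔ lLE (f x) (f y)
  desL_eq : ∀ x ∈ I, DesL (f x) = DesL x

namespace IsDescentPreservingIso

variable {I J : Set (Perm (Fin (n + 1)))} {f : Perm (Fin (n + 1)) → Perm (Fin (n + 1))}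

theorem symm (hf : IsDescentPreservingIso I J f) :
    IsDescentPreservingIso J I (Function.invFunOn f I) := by
  have hinv := hf.bijOn.invOn_invFunOn
  refine ⟨hf.bijOn.symm hinv.symm, fun x hx y hy => ?_, fun x hx => ?_⟩
  · obtain ⟨x', hx', rfl⟩ := hf.bijOn.surjOn hx
    obtain ⟨y', hy', rfl⟩ := hf.bijOn.surjOn hy
    rw [hinv.1 hx', hinv.1 hy', hf.lLE_iff x' hx' y' hy']
  · obtain ⟨x', hx', rfl⟩ := hf.bijOn.surjOn hx
    rw [hinv.1 hx', hf.desL_eq x' hx']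

theorem map_sgen_mul {σ₁ ρ₁ σ₂ ρ₂ : Perm (Fin (n + 1))}
    (hf : IsDescentPreservingIso (lInterval σ₁ ρ₁) (lInterval σ₂ ρ₂) f)
    {γ : Perm (Fin (n + 1))} {i : Fin n} (hγ : γ ∈ lInterval σ₁ ρ₁)
    (hγ' : sgen i * γ ∈ lInterval σ₁ ρ₁) (hle : lLE γ (sgen i * γ)) :
    f (sgen i * γ) = sgen i * f γ := by
  have hi : i ∉ DesL γ := lLE_sgen_mul_iff.1 hle
  have hfle : lLE (f γ) (f (sgen i * γ)) := (hf.lLE_iff _ hγ _ hγ').1 hle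
  have hfne : f γ ≠ f (sgen i * γ) := fun h => sgen_mul_ne_self i γ (hf.bijOn.injOn hγ hγ' h).symm
  obtain ⟨j, hj, hjle⟩ := exists_lLE_sgen_mul hfle hfne
  have hjmem : sgen j * f γ ∈ lInterval σ₂ ρ₂ :=
    ⟨(hf.bijOn.mapsTo hγ).1.trans (lLE_sgen_mul_iff.2 hj), hjle.trans (hf.bijOn.mapsTo hγ').2⟩
  obtain ⟨w, hw, hfw⟩ := hf.bijOn.surjOn hjmem
  have hγw : lLE γ w := (hf.lLE_iff _ hγ _ hw).2 (hfw ▸ lLE_sgen_mul_iff.2 hj)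
  have hwγ' : lLE w (sgen i * γ) := (hf.lLE_iff _ hw _ hγ').2 (hfw ▸ hjle)
  obtain rfl : w = sgen i * γ := by
    refine (eq_or_eq_of_lLE_of_lLE_sgen_mul hi hγw hwγ').resolve_left ?_
    rintro rfl
    exact sgen_mul_ne_self j _ hfw.symm
  have hj' : j ∈ DesL (sgen i * γ) := by
    rw [← hf.desL_eq _ hγ', hfw]
    exact desL_sgen_mul_self hj
  have hjγ : j ∉ DesL γ := by rwa [← hf.desL_eq _ hγ]
  obtain rfl : j = i := (desL_sgen_mul_subset hi hj').resolve_right hjγ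
  exact hfw

end IsDescentPreservingIso

theorem descent_preserving_is_colored_digraph_iso_general {n : ℕ}
    (σ₁ ρ₁ σ₂ ρ₂ : Equiv.Perm (Fin (n + 1)))
    (f : Equiv.Perm (Fin (n + 1)) → Equiv.Perm (Fin (n + 1)))
    (hbij : Set.BijOn f (lInterval σ₁ ρ₁) (lInterval σ₂ ρ₂))
    (hord : ∀ x ∈ lInterval σ₁ ρ₁, ∀ y ∈ lInterval σ₁ ρ₁, (lLE x y ↔ lLE (f x) (f y)))
    (hdes : ∀ x ∈ lInterval σ₁ ρ₁, DesL (f x) = DesL x) :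
    ∀ γ ∈ lInterval σ₁ ρ₁, ∀ γ' ∈ lInterval σ₁ ρ₁, ∀ i : Fin n,
      (lLE γ γ' ∧ γ' = sgen i * γ) ↔ (lLE (f γ) (f γ') ∧ f γ' = sgen i * f γ) := by
  have hf : IsDescentPreservingIso _ _ f := ⟨hbij, hord, hdes⟩
  intro γ hγ γ' hγ' i
  constructor
  · rintro ⟨hle, rfl⟩
    exact ⟨(hord γ hγ _ hγ').1 hle, hf.map_sgen_mul hγ hγ' hle⟩
  · rintro ⟨hle, heq⟩
    have hgf := hbij.invOn_invFunOn.1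
    refine ⟨(hord γ hγ γ' hγ').2 hle, ?_⟩
    have := hf.symm.map_sgen_mul (hbij.mapsTo hγ) (heq ▸ hbij.mapsTo hγ') (heq ▸ hle)
    rwa [← heq, hgf hγ, hgf hγ'] at this

/-- Every descent-preserving poset isomorphism between two left weak Bruhat intervals
is a colored digraph isomorphism. -/
theorem descent_preserving_is_colored_digraph_iso {n : ℕ}
    (σ₁ ρ₁ σ₂ ρ₂ : Equiv.Perm (Fin (n + 1))) (h₁ : lLE σ₁ ρ₁) (h₂ : lLE σ₂ ρ₂)
    (f : Equiv.Perm (Fin (n + 1)) → Equiv.Perm (Fin (n + 1)))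
    (hbij : Set.BijOn f (lInterval σ₁ ρ₁) (lInterval σ₂ ρ₂))
    (hord : ∀ x ∈ lInterval σ₁ ρ₁, ∀ y ∈ lInterval σ₁ ρ₁, (lLE x y ↔ lLE (f x) (f y)))
    (hdes : ∀ x ∈ lInterval σ₁ ρ₁, DesL (f x) = DesL x) :
    ∀ γ ∈ lInterval σ₁ ρ₁, ∀ γ' ∈ lInterval σ₁ ρ₁, ∀ i : Fin n,
      (lLE γ γ' ∧ γ' = sgen i * γ) ↔ (lLE (f γ) (f γ') ∧ f γ' = sgen i * f γ) :=
  descent_preserving_is_colored_digraph_iso_general σ₁ ρ₁ σ₂ ρ₂ f hbij hord hdes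
end

section
/- Let λ/μ be a skew partition of size n and let τ be a distinguished Schur labeling of shape λ/μ. For every standard Young tableau T of shape λ/μ, read_{τ₀}(T) ≤_R read_τ(T) ≤_R read_{τ₁}(T) in the right weak Bruhat order, where τ₀ is the Schur labeling filling 1,…,n right-to-left along rows starting from the top row, and τ₁ is the Schur labeling filling 1,…,n top-to-bottom along columns starting from the rightmost column. Moreover {read_τ(T) : τ distinguished Schur labeling of shape λ/μ} = [read_{τ₀}(T), read_{τ₁}(T)]_R. -/
/-- A skew partition `λ/μ`: a pair of Young diagrams with `μ ⊆ λ`. -/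
structure SkewShape where
  outer : YoungDiagram
  inner : YoungDiagram
  le : inner ≤ outer

/-- The cells of the skew diagram `λ/μ` (pairs `(row, column)`). -/
def SkewShape.cells (s : SkewShape) : Finset (ℕ × ℕ) := s.outer.cells \ s.inner.cells

/-- A bijective tableau of shape `λ/μ` of size `n`: a filling of the cells with the
`n` distinct entries of `Fin n`. -/
def IsBijFilling (s : SkewShape) (n : ℕ) (τ : ℕ × ℕ → Fin n) : Prop :=
  Set.BijOn τ ↑s.cells Set.univ

/-- A standard Young tableau of shape `λ/μ`: a bijective filling whose rows increase
left to right and whose columns increase top to bottom. -/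
def IsSYT (s : SkewShape) (n : ℕ) (T : ℕ × ℕ → Fin n) : Prop :=
  IsBijFilling s n T ∧
  (∀ i j, (i, j) ∈ s.cells → (i, j + 1) ∈ s.cells → T (i, j) < T (i, j + 1)) ∧
  (∀ i j, (i, j) ∈ s.cells → (i + 1, j) ∈ s.cells → T (i, j) < T (i + 1, j))

/-- A Schur labeling: a bijective filling whose rows strictly decrease left to right
and whose columns strictly increase top to bottom. -/
def IsSchurLabeling (s : SkewShape) (n : ℕ) (τ : ℕ × ℕ → Fin n) : Prop :=
  IsBijFilling s n τ ∧
  (∀ i j, (i, j) ∈ s.cells → (i, j + 1) ∈ s.cells → τ (i, j + 1) < τ (i, j)) ∧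
  (∀ i j, (i, j) ∈ s.cells → (i + 1, j) ∈ s.cells → τ (i, j) < τ (i + 1, j))

/-- A distinguished Schur labeling: `τ_B ≥ τ_{B'}` whenever `B` is weakly below and
weakly left of `B'`. -/
def IsDistinguished (s : SkewShape) (n : ℕ) (τ : ℕ × ℕ → Fin n) : Prop :=
  IsSchurLabeling s n τ ∧
  ∀ B ∈ s.cells, ∀ B' ∈ s.cells, B'.1 ≤ B.1 → B.2 ≤ B'.2 → τ B' ≤ τ B

/-- `π = read_τ(T)`, i.e. `π(τ(B)) = T(B)` for every box `B`; since `τ` is a bijective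
filling this determines `π` completely. -/
def IsReading (s : SkewShape) {n : ℕ} (τ T : ℕ × ℕ → Fin n) (π : Equiv.Perm (Fin n)) : Prop :=
  ∀ B ∈ s.cells, π (τ B) = T B

/-- The poset `poset(τ)` on labels: `x ≤ y` iff the box of `x` is weakly upper-left of
the box of `y`. -/
def posetRel (s : SkewShape) {n : ℕ} (τ : ℕ × ℕ → Fin n) (x y : Fin n) : Prop :=
  ∃ B ∈ s.cells, ∃ B' ∈ s.cells, τ B = x ∧ τ B' = y ∧ B.1 ≤ B'.1 ∧ B.2 ≤ B'.2

/-- `τ` is the Schur labeling `τ₀`, filling `1,…,n` right-to-left along rows starting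
with the top row: characterized by its bijectivity together with the induced order of
the boxes. -/
def IsTau0 (s : SkewShape) (n : ℕ) (τ : ℕ × ℕ → Fin n) : Prop :=
  IsBijFilling s n τ ∧
  ∀ B ∈ s.cells, ∀ B' ∈ s.cells, B ≠ B' →
    (τ B < τ B' ↔ (B.1 < B'.1 ∨ (B.1 = B'.1 ∧ B'.2 < B.2)))

/-- `τ` is the Schur labeling `τ₁`, filling `1,…,n` top-to-bottom along columns starting
with the rightmost column. -/
def IsTau1 (s : SkewShape) (n : ℕ) (τ : ℕ × ℕ → Fin n) : Prop :=
  IsBijFilling s n τ ∧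
  ∀ B ∈ s.cells, ∀ B' ∈ s.cells, B ≠ B' →
    (τ B < τ B' ↔ (B'.2 < B.2 ∨ (B.2 = B'.2 ∧ B.1 < B'.1)))

/-- `T` is the standard Young tableau `T_{λ/μ}`, filling `1,…,n` row by row from the
top, left to right in each row. -/
def IsRowTab (s : SkewShape) (n : ℕ) (T : ℕ × ℕ → Fin n) : Prop :=
  IsBijFilling s n T ∧
  ∀ B ∈ s.cells, ∀ B' ∈ s.cells, B ≠ B' →
    (T B < T B' ↔ (B.1 < B'.1 ∨ (B.1 = B'.1 ∧ B.2 < B'.2)))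

/-- `T` is the standard Young tableau `T'_{λ/μ}`, filling `1,…,n` column by column from
the leftmost column, top to bottom in each column. -/
def IsColTab (s : SkewShape) (n : ℕ) (T : ℕ × ℕ → Fin n) : Prop :=
  IsBijFilling s n T ∧
  ∀ B ∈ s.cells, ∀ B' ∈ s.cells, B ≠ B' →
    (T B < T B' ↔ (B.2 < B'.2 ∨ (B.2 = B'.2 ∧ B.1 < B'.1)))

/-!
Writing `σ B = γ⁻¹ (T B)`, every permutation `γ` is the reading of `T` for exactly one
labeling `σ`, and `(T B, T A)` with `T A < T B` is a right inversion of `γ` iff `σ B < σ A`.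
Since `T` increases towards the south-east, such a pair has `A` strictly left of `B`, or `A`
strictly above and weakly right of `B`. The inversions of `π₀` are the pairs with `A` weakly
below and strictly left of `B`, those of `π₁` the pairs with `A` strictly left of `B`.
So `π₀ ≤_R γ ≤_R π₁` says that `σ` inverts every pair of the first kind and no pair with
`B.2 ≤ A.2`, and this is exactly what it means for `σ` to be distinguished.
-/

namespace SkewShape

theorem mem_cells_iff (s : SkewShape) (B : ℕ × ℕ) :
    B ∈ s.cells ↔ B ∈ s.outer ∧ B ∉ s.inner := by
  simp [SkewShape.cells, YoungDiagram.mem_cells]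

theorem ordConnected_cells (s : SkewShape) : (s.cells : Set (ℕ × ℕ)).OrdConnected := by
  refine ⟨fun B hB D hD C ⟨hBC, hCD⟩ => ?_⟩
  rw [Finset.mem_coe, mem_cells_iff] at *
  exact ⟨s.outer.isLowerSet hCD hD.1, fun hC => hB.2 (s.inner.isLowerSet hBC hC)⟩

end SkewShape

section Tableaux

variable {s : SkewShape} {n : ℕ} {T τ σ : ℕ × ℕ → Fin n} {π ρ : Equiv.Perm (Fin n)}

theorem IsSYT.monotoneOn (hT : IsSYT s n T) : MonotoneOn T s.cells := by
  have hrow (i : ℕ) : MonotoneOn (fun j => T (i, j)) {j | (i, j) ∈ s.cells} :=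
    monotoneOn_of_le_add_one
      (s.ordConnected_cells.preimage_mono (monotone_prodMk_iff.mpr ⟨monotone_const, monotone_id⟩))
      fun j _ h h' => (hT.2.1 i j h h').le
  have hcol (j : ℕ) : MonotoneOn (fun i => T (i, j)) {i | (i, j) ∈ s.cells} :=
    monotoneOn_of_le_add_one
      (s.ordConnected_cells.preimage_mono (monotone_prodMk_iff.mpr ⟨monotone_id, monotone_const⟩))
      fun i _ h h' => (hT.2.2 i j h h').le
  rintro ⟨a, b⟩ hB ⟨c, d⟩ hB' ⟨hac, hbd⟩
  have hcorner : (a, d) ∈ s.cells :=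
    s.ordConnected_cells.out hB hB' ⟨⟨le_rfl, hbd⟩, ⟨hac, le_rfl⟩⟩
  exact (hrow a hB hcorner hbd).trans (hcol d hcorner hB' hac)

theorem IsSYT.snd_lt_of_lt (hT : IsSYT s n T) {A B : ℕ × ℕ} (hA : A ∈ s.cells)
    (hB : B ∈ s.cells) (hlt : T A < T B) (hrow : B.1 ≤ A.1) : A.2 < B.2 := by
  by_contra! hcol
  exact (hT.monotoneOn hB hA ⟨hrow, hcol⟩).not_gt hlt

theorem IsReading.inv_apply (hπ : IsReading s τ T π) {B : ℕ × ℕ} (hB : B ∈ s.cells) :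
    π⁻¹ (T B) = τ B := by
  rw [← hπ B hB, ← Equiv.Perm.mul_apply, inv_mul_cancel, Equiv.Perm.one_apply]

theorem IsReading.isBijFilling (hT : IsBijFilling s n T) (hπ : IsReading s τ T π) :
    IsBijFilling s n τ :=
  ((Equiv.bijective π⁻¹).bijOn_univ.comp hT).congr fun _ hB => hπ.inv_apply hB

theorem IsReading.mem_invR_iff (hπ : IsReading s τ T π) {A B : ℕ × ℕ} (hA : A ∈ s.cells)
    (hB : B ∈ s.cells) : (T B, T A) ∈ InvR π ↔ T A < T B ∧ τ B < τ A := by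
  simp only [InvR, Set.mem_ofPred_eq, hπ.inv_apply hA, hπ.inv_apply hB]

theorem rLE_iff_of_isReading (hT : IsBijFilling s n T) (hπ : IsReading s τ T π)
    (hρ : IsReading s σ T ρ) :
    rLE π ρ ↔ ∀ A ∈ s.cells, ∀ B ∈ s.cells, T A < T B → τ B < τ A → σ B < σ A := by
  constructor
  · intro h A hA B hB hlt hτ
    exact ((hρ.mem_invR_iff hA hB).mp (h ((hπ.mem_invR_iff hA hB).mpr ⟨hlt, hτ⟩))).2
  · rintro h ⟨b, a⟩ hp
    obtain ⟨A, hA, rfl⟩ := hT.surjOn (Set.mem_univ a)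
    obtain ⟨B, hB, rfl⟩ := hT.surjOn (Set.mem_univ b)
    obtain ⟨hlt, hτ⟩ := (hπ.mem_invR_iff hA hB).mp hp
    exact (hρ.mem_invR_iff hA hB).mpr ⟨hlt, h A hA B hB hlt hτ⟩

theorem IsTau0.lt_iff (hT : IsSYT s n T) (h0 : IsTau0 s n τ) {A B : ℕ × ℕ}
    (hA : A ∈ s.cells) (hB : B ∈ s.cells) (hlt : T A < T B) :
    τ B < τ A ↔ B.1 ≤ A.1 ∧ A.2 < B.2 := by
  have hne : B ≠ A := by rintro rfl; exact hlt.false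
  rw [h0.2 B hB A hA hne]
  constructor
  · rintro (hrow | ⟨hrow, hcol⟩)
    · exact ⟨hrow.le, hT.snd_lt_of_lt hA hB hlt hrow.le⟩
    · exact ⟨hrow.le, hcol⟩
  · rintro ⟨hrow, hcol⟩
    exact hrow.lt_or_eq.imp_right fun h => ⟨h, hcol⟩

theorem IsTau1.lt_iff (hT : IsSYT s n T) (h1 : IsTau1 s n τ) {A B : ℕ × ℕ}
    (hA : A ∈ s.cells) (hB : B ∈ s.cells) (hlt : T A < T B) :
    τ B < τ A ↔ A.2 < B.2 := by
  have hne : B ≠ A := by rintro rfl; exact hlt.false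
  rw [h1.2 B hB A hA hne]
  refine ⟨?_, Or.inl⟩
  rintro (hcol | ⟨hcol, hrow⟩)
  · exact hcol
  · exact absurd hcol (hT.snd_lt_of_lt hA hB hlt hrow.le).ne'

theorem IsDistinguished.lt_of_le_of_lt (hσ : IsDistinguished s n σ)
    {A B : ℕ × ℕ} (hA : A ∈ s.cells) (hB : B ∈ s.cells) (hrow : B.1 ≤ A.1)
    (hcol : A.2 < B.2) : σ B < σ A := by
  have hne : σ B ≠ σ A := fun h => hcol.ne (congrArg Prod.snd (hσ.1.1.injOn hB hA h)).symm
  exact (hσ.2 A hA B hB hrow hcol.le).lt_of_ne hne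

theorem IsDistinguished.snd_lt_of_lt (hT : IsSYT s n T) (hσ : IsDistinguished s n σ)
    {A B : ℕ × ℕ} (hA : A ∈ s.cells) (hB : B ∈ s.cells) (hlt : T A < T B)
    (hσlt : σ B < σ A) : A.2 < B.2 := by
  by_contra! hcol
  have hrow : A.1 ≤ B.1 := by
    by_contra! hrow
    exact hcol.not_gt (hT.snd_lt_of_lt hA hB hlt hrow.le)
  exact (hσ.2 B hB A hA hrow hcol).not_gt hσlt

theorem isDistinguished_of_lt (hT : IsSYT s n T) (hσ : IsBijFilling s n σ)
    (h0 : ∀ A ∈ s.cells, ∀ B ∈ s.cells, T A < T B → B.1 ≤ A.1 → A.2 < B.2 → σ B < σ A)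
    (h1 : ∀ A ∈ s.cells, ∀ B ∈ s.cells, T A < T B → σ B < σ A → A.2 < B.2) :
    IsDistinguished s n σ := by
  refine ⟨⟨hσ, fun i j h h' => ?_, fun i j h h' => ?_⟩, fun B hB B' hB' hrow hcol => ?_⟩
  · exact h0 _ h _ h' (hT.2.1 i j h h') le_rfl j.lt_succ_self
  · refine lt_of_le_of_ne (not_lt.mp fun hσlt => (h1 _ h _ h' (hT.2.2 i j h h') hσlt).false) ?_
    exact fun heq => by simpa using hσ.injOn h h' heq
  · rcases lt_trichotomy (T B) (T B') with hlt | heq | hgt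
    · exact (h0 B hB B' hB' hlt hrow (hT.snd_lt_of_lt hB hB' hlt hrow)).le
    · rw [hT.1.injOn hB hB' heq]
    · exact not_lt.mp fun hσlt => hcol.not_gt (h1 B' hB' B hB hgt hσlt)

theorem isDistinguished_iff_rLE (hT : IsSYT s n T) {τ₀ τ₁ : ℕ × ℕ → Fin n}
    (h0 : IsTau0 s n τ₀) (h1 : IsTau1 s n τ₁) {π₀ π₁ : Equiv.Perm (Fin n)}
    (hπ₀ : IsReading s τ₀ T π₀) (hπ₁ : IsReading s τ₁ T π₁) (hπ : IsReading s σ T π) :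
    IsDistinguished s n σ ↔ rLE π₀ π ∧ rLE π π₁ := by
  rw [rLE_iff_of_isReading hT.1 hπ₀ hπ, rLE_iff_of_isReading hT.1 hπ hπ₁]
  constructor
  · intro hσ
    refine ⟨fun A hA B hB hlt h => ?_, fun A hA B hB hlt h => ?_⟩
    · obtain ⟨hrow, hcol⟩ := (h0.lt_iff hT hA hB hlt).mp h
      exact hσ.lt_of_le_of_lt hA hB hrow hcol
    · exact (h1.lt_iff hT hA hB hlt).mpr (hσ.snd_lt_of_lt hT hA hB hlt h)
  · rintro ⟨hlo, hhi⟩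
    refine isDistinguished_of_lt hT (hπ.isBijFilling hT.1) ?_ ?_
    · exact fun A hA B hB hlt hrow hcol =>
        hlo A hA B hB hlt ((h0.lt_iff hT hA hB hlt).mpr ⟨hrow, hcol⟩)
    · exact fun A hA B hB hlt h => (h1.lt_iff hT hA hB hlt).mp (hhi A hA B hB hlt h)

end Tableaux

/-- For a standard Young tableau `T` of shape `λ/μ` and a distinguished Schur labeling
`τ`, one has `read_{τ₀}(T) ≤_R read_τ(T) ≤_R read_{τ₁}(T)`; moreover the set of readings
of `T` with respect to distinguished Schur labelings is exactly the right weak Bruhat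
interval `[read_{τ₀}(T), read_{τ₁}(T)]_R`. -/
theorem readings_fixed_T_interval (s : SkewShape) (n : ℕ) (T : ℕ × ℕ → Fin n)
    (hT : IsSYT s n T) (τ₀ τ₁ : ℕ × ℕ → Fin n) (h0 : IsTau0 s n τ₀) (h1 : IsTau1 s n τ₁)
    (π₀ π₁ : Equiv.Perm (Fin n)) (hπ₀ : IsReading s τ₀ T π₀) (hπ₁ : IsReading s τ₁ T π₁) :
    (∀ (τ : ℕ × ℕ → Fin n) (π : Equiv.Perm (Fin n)),
      IsDistinguished s n τ → IsReading s τ T π → rLE π₀ π ∧ rLE π π₁) ∧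
    {π : Equiv.Perm (Fin n) | ∃ τ : ℕ × ℕ → Fin n,
        IsDistinguished s n τ ∧ IsReading s τ T π} =
      {γ | rLE π₀ γ ∧ rLE γ π₁} := by
  have hiff {τ : ℕ × ℕ → Fin n} {π : Equiv.Perm (Fin n)} (hπ : IsReading s τ T π) :=
    isDistinguished_iff_rLE hT h0 h1 hπ₀ hπ₁ hπ
  refine ⟨fun τ π hτ hπ => (hiff hπ).mp hτ, Set.ext fun γ => ⟨?_, fun hγ => ?_⟩⟩
  · rintro ⟨τ, hτ, hγ⟩
    exact (hiff hγ).mp hτ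
  · have hread : IsReading s (fun B => γ⁻¹ (T B)) T γ := fun B _ => γ.apply_symm_apply (T B)
    exact ⟨_, (hiff hread).mpr hγ, hread⟩
end

section
/- A nonempty subset U of S_n with |U| > 1 is a left weak Bruhat interval if and only if U = Σ_L(P) for some regular poset P on {1,…,n}, where Σ_L(P) = {σ ∈ S_n : σ(i) ≤ σ(j) whenever i ≤_P j}. -/
/-- A partial order on `{1,…,n}` is regular if for all `x ≤_P z` and `y` between `x`
and `z` as integers, `x ≤_P y` or `y ≤_P z`. -/
def RegularRel {n : ℕ} (r : Fin n → Fin n → Prop) : Prop :=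
  ∀ x y z : Fin n, r x z → ((x < y ∧ y < z) ∨ (z < y ∧ y < x)) → r x y ∨ r y z

open Equiv Finset

section Rank

variable {α : Type*} [Fintype α] [DecidableEq α] {T : α → α → Prop} [DecidableRel T]

variable (T) in
def rank (a : α) : ℕ := #{b | T b a ∧ b ≠ a}

lemma rank_lt_card (a : α) : rank T a < Fintype.card α :=
  card_lt_card (filter_ssubset.2 ⟨a, mem_univ _, fun h => h.2 rfl⟩)

lemma rank_lt_rank [IsTrans α T] [Std.Antisymm T] {a b : α} (hab : T a b) (hne : a ≠ b) :
    rank T a < rank T b := by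
  refine card_lt_card ⟨fun c hc => ?_, fun h => ?_⟩
  · simp only [mem_filter, mem_univ, true_and] at hc ⊢
    refine ⟨trans_of T hc.1 hab, ?_⟩
    rintro rfl
    exact hne (antisymm_of T hab hc.1)
  · have ha : a ∈ ({c | T c b ∧ c ≠ b} : Finset α) := by simp [hab, hne]
    simpa using h ha

lemma rank_le_rank_iff [IsLinearOrder α T] {a b : α} : rank T a ≤ rank T b ↔ T a b := by
  refine ⟨fun h => ?_, fun h => ?_⟩
  · by_contra hab
    exact h.not_gt (rank_lt_rank ((total_of T a b).resolve_left hab) fun e => hab (e ▸ refl_of T a))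
  · rcases eq_or_ne a b with rfl | hne
    · exact le_rfl
    · exact (rank_lt_rank h hne).le

end Rank

lemma exists_perm_le_iff {n : ℕ} (T : Fin n → Fin n → Prop) [IsLinearOrder (Fin n) T] :
    ∃ σ : Perm (Fin n), ∀ i j, σ i ≤ σ j ↔ T i j := by
  classical
  let f : Fin n → Fin n := fun i => ⟨rank T i, (rank_lt_card i).trans_eq (Fintype.card_fin n)⟩
  have hf : ∀ i j, f i ≤ f j ↔ T i j := fun _ _ => Fin.mk_le_mk.trans rank_le_rank_iff
  have hinj : Function.Injective f := fun i j h =>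
    antisymm_of T ((hf i j).1 h.le) ((hf j i).1 h.ge)
  exact ⟨Equiv.ofBijective f (Finite.injective_iff_bijective.1 hinj), hf⟩

section TieBreak

variable {α : Type*} [LinearOrder α] {r : α → α → Prop}

variable (r) in
def tieBreak (a b : α) : Prop := r a b ∨ (a ≤ b ∧ ¬ r b a)

variable [IsPartialOrder α r]

lemma tieBreak_trans (hreg : ∀ x y z, r x z → (x < y ∧ y < z ∨ z < y ∧ y < x) → r x y ∨ r y z)
    {a b c : α} (hab : tieBreak r a b) (hbc : tieBreak r b c) :
    tieBreak r a c := by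
  rcases hab with hab | ⟨hab, hba⟩ <;> rcases hbc with hbc | ⟨hbc, hcb⟩
  · exact Or.inl (trans_of r hab hbc)
  · rcases le_or_gt a c with hac | hca
    · exact Or.inr ⟨hac, fun hca => hcb (trans_of r hca hab)⟩
    rcases hbc.eq_or_lt with rfl | hbc
    · exact Or.inl hab
    · exact Or.inl ((hreg a c b hab (Or.inr ⟨hbc, hca⟩)).resolve_right hcb)
  · rcases le_or_gt a c with hac | hca
    · exact Or.inr ⟨hac, fun hca => hba (trans_of r hbc hca)⟩
    rcases hab.eq_or_lt with rfl | hab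
    · exact Or.inl hbc
    · exact Or.inl ((hreg b a c hbc (Or.inr ⟨hca, hab⟩)).resolve_left hba)
  · refine Or.inr ⟨hab.trans hbc, fun hca => ?_⟩
    rcases hab.eq_or_lt with rfl | hab
    · exact hcb hca
    rcases hbc.eq_or_lt with rfl | hbc
    · exact hba hca
    exact (hreg c b a hca (Or.inr ⟨hab, hbc⟩)).elim hcb hba

lemma isLinearOrder_tieBreak
    (hreg : ∀ x y z, r x z → (x < y ∧ y < z ∨ z < y ∧ y < x) → r x y ∨ r y z) :
    IsLinearOrder α (tieBreak r) where
  refl a := Or.inl (refl_of r a)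
  trans _ _ _ := tieBreak_trans hreg
  antisymm a b := by
    rintro (hab | ⟨hab, hba⟩) (hba' | ⟨hba', hab'⟩)
    · exact antisymm_of r hab hba'
    · exact (hab' hab).elim
    · exact (hba hba').elim
    · exact le_antisymm hab hba'
  total a b := by
    by_cases hab : r a b
    · exact Or.inl (Or.inl hab)
    by_cases hba : r b a
    · exact Or.inr (Or.inl hba)
    exact (le_total a b).imp (fun h => Or.inr ⟨h, hba⟩) fun h => Or.inr ⟨h, hab⟩

end TieBreak

lemma InvL_eq_of_le_iff {n : ℕ} {σ : Perm (Fin n)} {T : Fin n → Fin n → Prop}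
    (hσ : ∀ i j, σ i ≤ σ j ↔ T i j) : InvL σ = {p | p.1 < p.2 ∧ ¬ T p.1 p.2} := by
  ext p
  simp only [InvL, Set.mem_ofPred_eq, ← hσ, not_le]

section Inversions

variable {n : ℕ}

def minInv (r : Fin n → Fin n → Prop) : Set (Fin n × Fin n) := {p | p.1 < p.2 ∧ r p.2 p.1}

def maxInv (r : Fin n → Fin n → Prop) : Set (Fin n × Fin n) := {p | p.1 < p.2 ∧ ¬ r p.1 p.2}

lemma setOf_forall_le_eq (r : Fin n → Fin n → Prop) :
    {γ : Perm (Fin n) | ∀ i j, r i j → γ i ≤ γ j} =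
      {γ | minInv r ⊆ InvL γ ∧ InvL γ ⊆ maxInv r} := by
  ext γ
  simp only [Set.mem_ofPred_eq]
  constructor
  · intro h
    refine ⟨fun ⟨i, j⟩ ⟨hij, hr⟩ => ⟨hij, (h j i hr).lt_of_ne (γ.injective.ne hij.ne')⟩,
      fun ⟨i, j⟩ ⟨hij, hγ⟩ => ⟨hij, fun hr => (h i j hr).not_gt hγ⟩⟩
  · rintro ⟨hmin, hmax⟩ i j hr
    rcases lt_trichotomy i j with hij | rfl | hji
    · exact le_of_not_gt fun hγ => (@hmax (i, j) ⟨hij, hγ⟩).2 hr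
    · exact le_rfl
    · exact (@hmin (j, i) ⟨hji, hr⟩).2.le

lemma minInv_subset_maxInv (r : Fin n → Fin n → Prop) [Std.Antisymm r] : minInv r ⊆ maxInv r :=
  fun _ ⟨hij, hr⟩ => ⟨hij, fun hr' => hij.ne (antisymm_of r hr' hr)⟩

lemma lLE.apply_lt {σ ρ : Perm (Fin n)} (h : lLE σ ρ) {i j : Fin n} (hij : i < j)
    (hσ : σ j < σ i) : ρ j < ρ i :=
  (@h (i, j) ⟨hij, hσ⟩).2

def intervalPoset (σ ρ : Perm (Fin n)) (i j : Fin n) : Prop := σ i ≤ σ j ∧ ρ i ≤ ρ j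

lemma isPartialOrder_intervalPoset (σ ρ : Perm (Fin n)) :
    IsPartialOrder (Fin n) (intervalPoset σ ρ) where
  refl _ := ⟨le_rfl, le_rfl⟩
  trans _ _ _ h h' := ⟨h.1.trans h'.1, h.2.trans h'.2⟩
  antisymm _ _ h h' := σ.injective (le_antisymm h.1 h'.1)

section Interval

variable {σ ρ : Perm (Fin n)} {i j : Fin n}

lemma intervalPoset_iff_of_lt (h : lLE σ ρ) (hij : i < j) : intervalPoset σ ρ i j ↔ ρ i < ρ j :=
  ⟨fun hr => hr.2.lt_of_ne (ρ.injective.ne hij.ne),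
    fun hρ => ⟨le_of_not_gt fun hσ => (h.apply_lt hij hσ).asymm hρ, hρ.le⟩⟩

lemma intervalPoset_iff_of_gt (h : lLE σ ρ) (hji : j < i) : intervalPoset σ ρ i j ↔ σ i < σ j :=
  ⟨fun hr => hr.1.lt_of_ne (σ.injective.ne hji.ne'),
    fun hσ => ⟨hσ.le, (h.apply_lt hji hσ).le⟩⟩

lemma regularRel_intervalPoset (h : lLE σ ρ) : RegularRel (intervalPoset σ ρ) := by
  rintro x y z hxz (⟨hxy, hyz⟩ | ⟨hzy, hyx⟩)
  · rw [intervalPoset_iff_of_lt h (hxy.trans hyz)] at hxz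
    rw [intervalPoset_iff_of_lt h hxy, intervalPoset_iff_of_lt h hyz]
    exact (lt_or_gt_of_ne (ρ.injective.ne hxy.ne)).imp_right fun hyx => hyx.trans hxz
  · rw [intervalPoset_iff_of_gt h (hzy.trans hyx)] at hxz
    rw [intervalPoset_iff_of_gt h hyx, intervalPoset_iff_of_gt h hzy]
    exact (lt_or_gt_of_ne (σ.injective.ne hyx.ne')).imp_right fun hyx => hyx.trans hxz

lemma minInv_intervalPoset (h : lLE σ ρ) : minInv (intervalPoset σ ρ) = InvL σ := by
  ext ⟨i, j⟩
  exact and_congr_right fun hij => intervalPoset_iff_of_gt h hij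

lemma maxInv_intervalPoset (h : lLE σ ρ) : maxInv (intervalPoset σ ρ) = InvL ρ := by
  ext ⟨i, j⟩
  exact and_congr_right fun hij =>
    (intervalPoset_iff_of_lt h hij).not.trans (not_lt.trans (ρ.injective.ne hij.ne').le_iff_lt)

end Interval

section Regular

variable {r : Fin n → Fin n → Prop} [IsPartialOrder (Fin n) r]

lemma exists_InvL_eq_minInv (hreg : RegularRel r) : ∃ σ : Perm (Fin n), InvL σ = minInv r := by
  have := isLinearOrder_tieBreak hreg
  obtain ⟨σ, hσ⟩ := exists_perm_le_iff (tieBreak r)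
  refine ⟨σ, (InvL_eq_of_le_iff hσ).trans ?_⟩
  ext ⟨i, j⟩
  refine and_congr_right fun hij => ?_
  simp only [tieBreak, hij.le, true_and, not_or, not_not]
  exact ⟨And.right, fun hji => ⟨fun hij' => hij.ne (antisymm_of r hij' hji), hji⟩⟩

lemma exists_InvL_eq_maxInv (hreg : RegularRel r) : ∃ ρ : Perm (Fin n), InvL ρ = maxInv r := by
  have : IsPartialOrder (Fin n)ᵒᵈ r := inferInstanceAs (IsPartialOrder (Fin n) r)
  have hlin := isLinearOrder_tieBreak (α := (Fin n)ᵒᵈ) (r := r) fun x y z hxz hy =>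
    hreg x y z hxz (hy.symm.imp And.symm And.symm)
  obtain ⟨ρ, hρ⟩ := @exists_perm_le_iff n (tieBreak (α := (Fin n)ᵒᵈ) r) hlin
  refine ⟨ρ, (InvL_eq_of_le_iff hρ).trans ?_⟩
  ext ⟨i, j⟩
  refine and_congr_right fun hij => ?_
  change ¬(r i j ∨ (j ≤ i ∧ ¬r j i)) ↔ ¬r i j
  simp [hij.not_ge]

end Regular
end Inversions

theorem left_interval_iff_regular_general {n : ℕ} (U : Set (Equiv.Perm (Fin n))) :
    (∃ σ ρ, lLE σ ρ ∧ U = {γ | lLE σ γ ∧ lLE γ ρ}) ↔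
    (∃ r : Fin n → Fin n → Prop, IsPartialOrder (Fin n) r ∧ RegularRel r ∧
      U = {σ : Equiv.Perm (Fin n) | ∀ i j, r i j → σ i ≤ σ j}) := by
  constructor
  · rintro ⟨σ, ρ, hσρ, rfl⟩
    refine ⟨intervalPoset σ ρ, isPartialOrder_intervalPoset σ ρ, regularRel_intervalPoset hσρ, ?_⟩
    rw [setOf_forall_le_eq, minInv_intervalPoset hσρ, maxInv_intervalPoset hσρ]
    rfl
  · rintro ⟨r, hpo, hreg, rfl⟩
    obtain ⟨σ, hσ⟩ := exists_InvL_eq_minInv hreg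
    obtain ⟨ρ, hρ⟩ := exists_InvL_eq_maxInv hreg
    refine ⟨σ, ρ, ?_, ?_⟩
    · change InvL σ ⊆ InvL ρ
      rw [hσ, hρ]
      exact minInv_subset_maxInv r
    · rw [setOf_forall_le_eq, ← hσ, ← hρ]
      rfl

/-- A subset `U ⊆ S_n` with `|U| > 1` is a left weak Bruhat interval if and only if
`U = Σ_L(P)` for some regular poset `P` on `{1,…,n}`. -/
theorem left_interval_iff_regular {n : ℕ} (U : Set (Equiv.Perm (Fin n)))
    (hU : 1 < U.ncard) :
    (∃ σ ρ, lLE σ ρ ∧ U = {γ | lLE σ γ ∧ lLE γ ρ}) ↔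
    (∃ r : Fin n → Fin n → Prop, IsPartialOrder (Fin n) r ∧ RegularRel r ∧
      U = {σ : Equiv.Perm (Fin n) | ∀ i j, r i j → σ i ≤ σ j}) :=
  left_interval_iff_regular_general U
end
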